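/- Let g be a square-integrable random vector in ℝ^d with mean G = E[g] and covariance Σ = E[(g − G)(g − G)ᵀ]. Let 𝒜 = {v₁,…,v_{|𝒜|}} ⊆ ℝ^d be a finite set of atoms with |𝒜| ≥ 2 and ‖vᵢ‖₂ ≤ D for all i. Let g₁,…,gₙ be n independent copies of g with n ≥ 72·⌈log |𝒜|⌉ and n divisible by K = ⌈18·log |𝒜|⌉. For each atom vᵢ let r̃ᵢ be the median-of-means estimator with parameter K applied to the samples ⟨g₁, vᵢ⟩,…,⟨gₙ, vᵢ⟩. Let ṽ⁺ = v_{i⁺} with i⁺ minimizing r̃ᵢ, ṽ⁻ = v_{i⁻} with i⁻ maximizing r̃ᵢ, let v⁺ minimize ⟨G, v⟩ over 𝒜 and v⁻ maximize ⟨G, v⟩ over 𝒜. Then with probability at least 1 − 2·|𝒜|^{−3}, |⟨G, ṽ⁺ − ṽ⁻⟩ − ⟨G, v⁺ − v⁻⟩| ≤ 48·D·√(‖Σ‖_op)·√(⌈log |𝒜|⌉/n). -/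

import Mathlib

open MeasureTheory ProbabilityTheory Real
open scoped RealInnerProductSpace ENNReal

/-- The average of the `k`-th consecutive block of size `m` of the real samples `Y`. -/
noncomputable def blockAvg {Ω : Type*} (m : ℕ) (Y : ℕ → Ω → ℝ) (k : ℕ) (ω : Ω) : ℝ :=
  (∑ j ∈ Finset.range m, Y (k * m + j) ω) / m

/-- `med` is a median-of-means estimator with parameter `K` (block size `m`) for the
samples `Y`: pointwise, at least `K/2` of the `K` block averages are `≤ med` and at
least `K/2` of them are `≥ med`. -/
def IsMedianOfMeans {Ω : Type*} (K m : ℕ) (Y : ℕ → Ω → ℝ) (med : Ω → ℝ) : Prop :=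
  ∀ ω : Ω,
    (K : ℝ) / 2 ≤ (((Finset.range K).filter fun k => blockAvg m Y k ω ≤ med ω).card : ℝ) ∧
    (K : ℝ) / 2 ≤ (((Finset.range K).filter fun k => med ω ≤ blockAvg m Y k ω).card : ℝ)

/-- The operator (spectral) norm of a real `d × d` matrix, acting on Euclidean space. -/
noncomputable def matOpNorm {d : ℕ} (A : Matrix (Fin d) (Fin d) ℝ) : ℝ :=
  ‖(Matrix.toEuclideanCLM (𝕜 := ℝ) A : EuclideanSpace ℝ (Fin d) →L[ℝ] EuclideanSpace ℝ (Fin d))‖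

/-- Restriction of a dependent tuple along a finset inclusion. -/
def resTup {n : ℕ} {E : Type*} {U V : Finset (Fin n)} (h : U ⊆ V)
    (x : (i : V) → E) (i : U) : E := x ⟨i.1, h i.2⟩

lemma measurable_resTup {n : ℕ} {E : Type*} [MeasurableSpace E] {U V : Finset (Fin n)}
    (h : U ⊆ V) : Measurable (resTup (E := E) h) :=
  measurable_pi_lambda _ (fun _ => measurable_pi_apply _)

/-- Product formula for events depending on disjoint groups of independent random variables. -/
lemma meas_biInter_blocks {Ω : Type*} [MeasureSpace Ω] [IsProbabilityMeasure (ℙ : Measure Ω)]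
    {E : Type*} [MeasurableSpace E]
    {n : ℕ} {f : Fin n → Ω → E} (hmeas : ∀ i, Measurable (f i))
    (hindep : iIndepFun (fun j : Fin n => f j) ℙ)
    {ι : Type*} [DecidableEq ι] (B : ι → Finset (Fin n))
    (hdisj : ∀ k l, k ≠ l → Disjoint (B k) (B l))
    (A : ι → Set Ω)
    (S : Finset ι)
    (hA : ∀ k ∈ S, ∃ C : Set ((i : B k) → E), MeasurableSet C ∧
      A k = (fun ω (i : B k) => f i ω) ⁻¹' C) :
    ℙ (⋂ k ∈ S, A k) = ∏ k ∈ S, ℙ (A k) := by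
  classical
  suffices H : ∀ S : Finset ι, (∀ k ∈ S, ∃ C : Set ((i : B k) → E), MeasurableSet C ∧
      A k = (fun ω (i : B k) => f i ω) ⁻¹' C) →
      (∃ M : Set ((i : S.biUnion B) → E), MeasurableSet M ∧
        (⋂ k ∈ S, A k) = (fun ω (i : S.biUnion B) => f i ω) ⁻¹' M) ∧
      ℙ (⋂ k ∈ S, A k) = ∏ k ∈ S, ℙ (A k) from (H S hA).2
  intro S
  induction S using Finset.induction_on with
  | empty =>
    intro _
    refine ⟨⟨Set.univ, MeasurableSet.univ, by simp⟩, by simp⟩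
  | @insert k₀ S hk₀ ih =>
    intro hA
    obtain ⟨C₀, hC₀m, hA₀⟩ := hA k₀ (Finset.mem_insert_self _ _)
    obtain ⟨⟨M, hMm, hMrep⟩, hprod⟩ := ih (fun k hk => hA k (Finset.mem_insert_of_mem hk))
    have hdT : Disjoint (B k₀) (S.biUnion B) := by
      rw [Finset.disjoint_biUnion_right]
      exact fun l hl => hdisj k₀ l (fun h => hk₀ (h ▸ hl))
    have hsub₀ : B k₀ ⊆ (insert k₀ S).biUnion B := by
      intro x hx; exact Finset.mem_biUnion.2 ⟨k₀, Finset.mem_insert_self _ _, hx⟩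
    have hsubT : S.biUnion B ⊆ (insert k₀ S).biUnion B := by
      intro x hx
      rw [Finset.mem_biUnion] at hx
      obtain ⟨l, hl, hxl⟩ := hx
      exact Finset.mem_biUnion.2 ⟨l, Finset.mem_insert_of_mem hl, hxl⟩
    have hrep₀' : A k₀ = (fun ω (i : (insert k₀ S).biUnion B) => f i ω) ⁻¹'
        (resTup hsub₀ ⁻¹' C₀) := hA₀
    have hrepS : (⋂ k ∈ S, A k) = (fun ω (i : (insert k₀ S).biUnion B) => f i ω) ⁻¹'
        (resTup hsubT ⁻¹' M) := hMrep
    have hinter : (⋂ k ∈ insert k₀ S, A k) = A k₀ ∩ ⋂ k ∈ S, A k := by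
      simp [Set.biInter_insert]
    constructor
    · refine ⟨resTup hsub₀ ⁻¹' C₀ ∩ resTup hsubT ⁻¹' M,
        ((measurable_resTup hsub₀) hC₀m).inter ((measurable_resTup hsubT) hMm), ?_⟩
      rw [hinter, Set.preimage_inter, ← hrep₀', ← hrepS]
    · have hIF : IndepFun (fun a (i : B k₀) => f i a)
          (fun a (i : S.biUnion B) => f i a) ℙ :=
        hindep.indepFun_finset (B k₀) (S.biUnion B) hdT hmeas
      have := (indepFun_iff_measure_inter_preimage_eq_mul.mp hIF) C₀ M hC₀m hMm
      rw [hinter, Finset.prod_insert hk₀, ← hprod, hA₀, hMrep]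
      exact this

lemma abs_mul_le_half_sq (x y : ℝ) : |x * y| ≤ (x ^ 2 + y ^ 2) / 2 := by
  rw [abs_mul]
  nlinarith [sq_nonneg (|x| - |y|), sq_abs x, sq_abs y, abs_nonneg x, abs_nonneg y]

lemma memLp_inner_right {Ω : Type*} [MeasureSpace Ω] {d : ℕ} {p : ENNReal}
    {g : Ω → EuclideanSpace ℝ (Fin d)} (hg : MemLp g p ℙ) (w : EuclideanSpace ℝ (Fin d)) :
    MemLp (fun ω => ⟪g ω, w⟫) p ℙ := by
  have : (fun ω => ⟪g ω, w⟫) = fun ω => (innerSL ℝ w) (g ω) := by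
    funext ω; exact (real_inner_comm _ _)
  rw [this]
  exact (innerSL ℝ w).comp_memLp' hg

lemma integral_inner_right {Ω : Type*} [MeasureSpace Ω] [IsProbabilityMeasure (ℙ : Measure Ω)]
    {d : ℕ} {g : Ω → EuclideanSpace ℝ (Fin d)} (hg : Integrable g ℙ)
    {G : EuclideanSpace ℝ (Fin d)} (hG : ∫ ω, g ω ∂ℙ = G) (w : EuclideanSpace ℝ (Fin d)) :
    ∫ ω, ⟪g ω, w⟫ ∂ℙ = ⟪G, w⟫ := by
  have h1 : (fun ω => ⟪g ω, w⟫) = fun ω => (innerSL ℝ w) (g ω) := by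
    funext ω; exact (real_inner_comm _ _)
  rw [h1, ContinuousLinearMap.integral_comp_comm _ hg, hG]
  exact real_inner_comm G w

lemma variance_inner_le {Ω : Type*} [MeasureSpace Ω] [IsProbabilityMeasure (ℙ : Measure Ω)]
    {d : ℕ} {g : Ω → EuclideanSpace ℝ (Fin d)} (hg2 : MemLp g 2 ℙ)
    {G : EuclideanSpace ℝ (Fin d)} (hG : ∫ ω, g ω ∂ℙ = G)
    {Sig : Matrix (Fin d) (Fin d) ℝ}
    (hSig : ∀ i j, Sig i j = ∫ ω, (g ω i - G i) * (g ω j - G j) ∂ℙ)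
    (w : EuclideanSpace ℝ (Fin d)) :
    variance (fun ω => ⟪g ω, w⟫) ℙ ≤ matOpNorm Sig * (‖w‖ * ‖w‖) := by
  classical
  set W : Ω → ℝ := fun ω => ⟪g ω, w⟫ with hW
  have hWp : MemLp W 2 ℙ := memLp_inner_right hg2 w
  have hEW : ∫ ω, W ω ∂ℙ = ⟪G, w⟫ :=
    integral_inner_right (hg2.integrable one_le_two) hG w
  set F : Fin d → Ω → ℝ := fun a ω => g ω a - G a with hF
  have hFp : ∀ a, MemLp (F a) 2 ℙ := by
    intro a
    have : MemLp (fun ω => (EuclideanSpace.proj (𝕜 := ℝ) a) (g ω)) 2 ℙ :=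
      (EuclideanSpace.proj (𝕜 := ℝ) a).comp_memLp' hg2
    exact this.sub (memLp_const (G a))
  have hint : ∀ a b, Integrable (fun ω => F a ω * F b ω) ℙ := by
    intro a b
    have h1 : Integrable (fun ω => ((F a ω) ^ 2 + (F b ω) ^ 2) / 2) ℙ :=
      ((hFp a).integrable_sq.add (hFp b).integrable_sq).div_const 2
    refine h1.mono' ((hFp a).aestronglyMeasurable.mul (hFp b).aestronglyMeasurable) ?_
    filter_upwards with ω
    rw [Real.norm_eq_abs]
    exact abs_mul_le_half_sq _ _
  have hpt : ∀ ω, (W ω - ⟪G, w⟫) ^ 2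
      = ∑ a : Fin d, ∑ b : Fin d, (w a * w b) * (F a ω * F b ω) := by
    intro ω
    have h1 : W ω - ⟪G, w⟫ = ∑ a : Fin d, F a ω * w a := by
      simp only [hW, hF, PiLp.inner_apply, RCLike.inner_apply, conj_trivial]
      rw [← Finset.sum_sub_distrib]
      exact Finset.sum_congr rfl fun a _ => by ring
    rw [h1, sq, Finset.sum_mul_sum]
    exact Finset.sum_congr rfl fun a _ => Finset.sum_congr rfl fun b _ => by ring
  have hvar : variance W ℙ = ∑ a : Fin d, ∑ b : Fin d, (w a * w b) * Sig a b := by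
    rw [variance_eq_integral hWp.aestronglyMeasurable.aemeasurable,
      show (fun ω => (W ω - ∫ ω', W ω' ∂ℙ) ^ 2) = (W - fun _ => ∫ ω', W ω' ∂ℙ) ^ 2 from rfl]
    have hfun : (W - fun _ => ∫ ω', W ω' ∂ℙ) ^ 2
        = fun ω => ∑ a : Fin d, ∑ b : Fin d, (w a * w b) * (F a ω * F b ω) := by
      funext ω
      simp only [Pi.pow_apply, Pi.sub_apply]
      rw [hEW]
      exact hpt ω
    rw [hfun, integral_finset_sum]
    · refine Finset.sum_congr rfl fun a _ => ?_
      rw [integral_finset_sum]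
      · refine Finset.sum_congr rfl fun b _ => ?_
        rw [integral_const_mul, hSig a b]
      · exact fun b _ => (hint a b).const_mul _
    · intro a _
      exact integrable_finset_sum _ (fun b _ => (hint a b).const_mul _)
  have hquad : variance W ℙ
      = ⟪(Matrix.toEuclideanCLM (𝕜 := ℝ) Sig) w, w⟫ := by
    rw [hvar]
    have happ : ∀ a : Fin d, ((Matrix.toEuclideanCLM (𝕜 := ℝ) Sig) w) a
        = ∑ b : Fin d, Sig a b * w b := by
      intro a
      have h := congrFun (Matrix.ofLp_toEuclideanCLM (𝕜 := ℝ) (A := Sig) w) a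
      simpa [Matrix.mulVec, dotProduct] using h
    rw [PiLp.inner_apply]
    simp only [RCLike.inner_apply, conj_trivial, happ]
    refine Finset.sum_congr rfl fun a _ => ?_
    rw [Finset.mul_sum]
    refine Finset.sum_congr rfl fun b _ => by ring
  rw [hquad]
  calc ⟪(Matrix.toEuclideanCLM (𝕜 := ℝ) Sig) w, w⟫
      ≤ ‖(Matrix.toEuclideanCLM (𝕜 := ℝ) Sig) w‖ * ‖w‖ := real_inner_le_norm _ _
    _ ≤ matOpNorm Sig * (‖w‖ * ‖w‖) := by
        rw [← mul_assoc]
        exact mul_le_mul_of_nonneg_right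
          (((Matrix.toEuclideanCLM (𝕜 := ℝ) Sig)).le_opNorm w) (norm_nonneg w)

set_option maxHeartbeats 1600000 in
/-- **RLMO implies RASC under the heavy-tail model.**
Given `n ≥ 72⌈log |𝒜|⌉` i.i.d. copies of a square-integrable random vector `g` in `ℝ^d`
with mean `G` and covariance `Sig`, atoms `v i` (`|𝒜| = N ≥ 2`) of norm at most `D`,
median-of-means scores `rt i` with `K = ⌈18 log |𝒜|⌉` blocks for the samples `⟨g_j, v i⟩`,
Frank-Wolfe atom `v (ip ω)` minimizing and away atom `v (im ω)` maximizing the scores, and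
`v jp`, `v jm` the exact minimizer and maximizer of `⟨G, ·⟩` over the atoms, we have
`|⟨G, v ip - v im⟩ - ⟨G, v jp - v jm⟩| ≤ 48 D √(‖Sig‖_op) √(⌈log |𝒜|⌉ / n)` with
probability at least `1 - 2 |𝒜|⁻³`. -/
theorem rlmo_implies_rasc_heavy_tail
    {Ω : Type*} [MeasureSpace Ω] [IsProbabilityMeasure (ℙ : Measure Ω)]
    {d : ℕ}
    (g : Ω → EuclideanSpace ℝ (Fin d)) (hgmeas : Measurable g) (hg2 : MemLp g 2 ℙ)
    (G : EuclideanSpace ℝ (Fin d)) (hG : ∫ ω, g ω ∂ℙ = G)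
    (Sig : Matrix (Fin d) (Fin d) ℝ)
    (hSig : ∀ i j, Sig i j = ∫ ω, (g ω i - G i) * (g ω j - G j) ∂ℙ)
    (N : ℕ) (hN : 2 ≤ N)
    (v : Fin N → EuclideanSpace ℝ (Fin d)) (D : ℝ) (hv : ∀ i, ‖v i‖ ≤ D)
    (K m n : ℕ) (hK : K = ⌈(18 : ℝ) * Real.log N⌉₊)
    (hn : n = K * m) (hn72 : 72 * ⌈Real.log N⌉₊ ≤ n)
    (gs : ℕ → Ω → EuclideanSpace ℝ (Fin d))
    (hmeas : ∀ j, Measurable (gs j))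
    (hindep : iIndepFun (fun j : Fin n => gs j) ℙ)
    (hident : ∀ j : Fin n, IdentDistrib (gs j) g ℙ ℙ)
    (rt : Fin N → Ω → ℝ)
    (hmom : ∀ i, IsMedianOfMeans K m (fun j ω => ⟪gs j ω, v i⟫) (rt i))
    (ip im : Ω → Fin N)
    (hip : ∀ ω i, rt (ip ω) ω ≤ rt i ω) (him : ∀ ω i, rt i ω ≤ rt (im ω) ω)
    (jp jm : Fin N)
    (hjp : ∀ i, ⟪G, v jp⟫ ≤ ⟪G, v i⟫) (hjm : ∀ i, ⟪G, v i⟫ ≤ ⟪G, v jm⟫) :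
    1 - 2 / (N : ℝ) ^ 3 ≤
      (ℙ {ω | |⟪G, v (ip ω) - v (im ω)⟫ - ⟪G, v jp - v jm⟫| ≤
        48 * D * Real.sqrt (matOpNorm Sig) *
          Real.sqrt ((⌈Real.log N⌉₊ : ℝ) / n)}).toReal := by
  classical
  have hN1 : (1 : ℝ) < (N : ℝ) := by exact_mod_cast hN.trans_lt' one_lt_two
  have hlogN : 0 < Real.log N := Real.log_pos hN1
  set L : ℕ := ⌈Real.log N⌉₊ with hLdef
  have hL1 : 1 ≤ L := Nat.ceil_pos.mpr hlogN
  have hKle : K ≤ 18 * L := by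
    rw [hK]
    refine Nat.ceil_le.mpr ?_
    push_cast
    have := Nat.le_ceil (Real.log N)
    nlinarith [this]
  have hK1 : 1 ≤ K := by
    rw [hK]
    exact Nat.ceil_pos.mpr (by positivity)
  have hn0 : 0 < n := lt_of_lt_of_le (by positivity) hn72
  have hm0 : 0 < m := by
    rcases Nat.eq_zero_or_pos m with h | h
    · exfalso; rw [hn, h, mul_zero] at hn0; exact lt_irrefl 0 hn0
    · exact h
  -- main quantities
  set σop : ℝ := matOpNorm Sig with hσop
  have hσ0 : 0 ≤ σop := norm_nonneg _
  set ε : ℝ := 12 * D * Real.sqrt σop * Real.sqrt ((L : ℝ) / n) with hεdef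
  set μf : Fin N → ℝ := fun i => ⟪G, v i⟫ with hμf
  have hD0 : 0 ≤ D := le_trans (norm_nonneg _) (hv ⟨0, by omega⟩)
  have hε0 : 0 ≤ ε := by positivity
  -- deterministic part
  have hgood : ∀ ω, (∀ i, |rt i ω - μf i| ≤ ε) →
      |⟪G, v (ip ω) - v (im ω)⟫ - ⟪G, v jp - v jm⟫| ≤
        48 * D * Real.sqrt (matOpNorm Sig) * Real.sqrt ((L : ℝ) / n) := by
    intro ω hω
    have e1 : ⟪G, v (ip ω) - v (im ω)⟫ = μf (ip ω) - μf (im ω) := by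
      simp [hμf, inner_sub_right]
    have e2 : ⟪G, v jp - v jm⟫ = μf jp - μf jm := by simp [hμf, inner_sub_right]
    have h48 : 48 * D * Real.sqrt (matOpNorm Sig) * Real.sqrt ((L : ℝ) / n) = 4 * ε := by
      rw [hεdef, hσop]; ring
    rw [e1, e2, h48]
    have a1 := abs_le.mp (hω (ip ω))
    have a2 := abs_le.mp (hω (im ω))
    have a3 := abs_le.mp (hω jp)
    have a4 := abs_le.mp (hω jm)
    have b1 : μf jp ≤ μf (ip ω) := hjp _
    have b3 : μf (im ω) ≤ μf jm := hjm _
    have b2 : μf (ip ω) ≤ μf jp + 2 * ε := by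
      have := hip ω jp; linarith [a1.1, a1.2, a3.1, a3.2]
    have b4 : μf jm - 2 * ε ≤ μf (im ω) := by
      have := him ω jm; linarith [a2.1, a2.2, a4.1, a4.2]
    rw [abs_le]
    constructor <;> linarith
  -- per-atom probabilistic bound
  have hatom : ∀ i : Fin N, ℙ {ω | ε < |rt i ω - μf i|} ≤ ENNReal.ofReal (2 / (N : ℝ) ^ 4) := by
    intro i
    set Y : ℕ → Ω → ℝ := fun j ω => ⟪gs j ω, v i⟫ with hYdef
    set Xb : ℕ → Ω → ℝ := fun k ω => blockAvg m Y k ω with hXbdef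
    set bad : ℕ → Set Ω := fun k => {ω | ε < |Xb k ω - μf i|} with hbaddef
    set h : ℕ := (K + 1) / 2 with hhdef
    have hmI : Measurable (fun x : EuclideanSpace ℝ (Fin d) => ⟪x, v i⟫) := by
      have hfe : (fun x : EuclideanSpace ℝ (Fin d) => ⟪x, v i⟫)
          = fun x => (innerSL ℝ (v i)) x := by
        funext x; exact real_inner_comm _ _
      rw [hfe]; exact (innerSL ℝ (v i)).continuous.measurable
    set σi : ℝ := variance (fun ω => ⟪g ω, v i⟫) ℙ with hσidef
    have hσi0 : 0 ≤ σi := variance_nonneg _ _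
    have hσile : σi ≤ σop * (D * D) := by
      have h1 := variance_inner_le hg2 hG hSig (v i)
      have h2 : ‖v i‖ * ‖v i‖ ≤ D * D :=
        mul_le_mul (hv i) (hv i) (norm_nonneg _) hD0
      calc σi ≤ matOpNorm Sig * (‖v i‖ * ‖v i‖) := h1
        _ ≤ σop * (D * D) := mul_le_mul_of_nonneg_left h2 hσ0
    have hjlt : ∀ k j, k < K → j < m → k * m + j < n := by
      intro k j hk hj
      calc k * m + j < k * m + m := by omega
        _ = (k + 1) * m := by ring
        _ ≤ K * m := Nat.mul_le_mul_right _ (by omega)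
        _ = n := hn.symm
    have hgsmem : ∀ j, j < n → MemLp (gs j) 2 ℙ := fun j hj =>
      (hident ⟨j, hj⟩).symm.memLp_snd hg2
    have hYmem : ∀ j, j < n → MemLp (Y j) 2 ℙ := fun j hj =>
      memLp_inner_right (hgsmem j hj) (v i)
    have hYint : ∀ j, j < n → ∫ ω, Y j ω ∂ℙ = μf i := by
      intro j hj
      have hEgs : ∫ ω, gs j ω ∂ℙ = G := by
        rw [(hident ⟨j, hj⟩).integral_eq, hG]
      exact integral_inner_right ((hgsmem j hj).integrable one_le_two) hEgs (v i)
    have hYvar : ∀ j, j < n → variance (Y j) ℙ = σi := by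
      intro j hj
      exact ((hident ⟨j, hj⟩).comp hmI).variance_eq
    -- block facts
    have hXbfact : ∀ k, k < K →
        MemLp (Xb k) 2 ℙ ∧ (∫ ω, Xb k ω ∂ℙ) = μf i ∧ variance (Xb k) ℙ = σi / m := by
      intro k hk
      have hmem : ∀ j ∈ Finset.range m, MemLp (fun ω => Y (k * m + j) ω) 2 ℙ :=
        fun j hj => hYmem _ (hjlt k j hk (Finset.mem_range.mp hj))
      have hSmem : MemLp (fun ω => ∑ j ∈ Finset.range m, Y (k * m + j) ω) 2 ℙ := by
        have h1 := memLp_finset_sum' (Finset.range m)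
          (f := fun j ω => Y (k * m + j) ω) hmem
        have h2 : (∑ j ∈ Finset.range m, fun ω => Y (k * m + j) ω)
            = fun ω => ∑ j ∈ Finset.range m, Y (k * m + j) ω := by
          funext ω; simp [Finset.sum_apply]
        rwa [h2] at h1
      have hXeq : Xb k = fun ω => (m : ℝ)⁻¹ * ∑ j ∈ Finset.range m, Y (k * m + j) ω := by
        funext ω
        rw [hXbdef]
        simp only [blockAvg, div_eq_inv_mul]
      have hm0R : (0 : ℝ) < m := by exact_mod_cast hm0
      refine ⟨?_, ?_, ?_⟩
      · rw [hXeq]; exact hSmem.const_mul _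
      · rw [hXeq, integral_const_mul,
          integral_finset_sum _ (fun j hj => (hmem j hj).integrable one_le_two)]
        rw [Finset.sum_congr rfl (fun j hj => hYint _ (hjlt k j hk (Finset.mem_range.mp hj)))]
        rw [Finset.sum_const, Finset.card_range, nsmul_eq_mul]
        field_simp
      · have hpair : Set.Pairwise ↑(Finset.range m)
            (fun j j' => IndepFun (fun ω => Y (k * m + j) ω) (fun ω => Y (k * m + j') ω) ℙ) := by
          intro a ha b hb hab
          simp only [Finset.coe_range, Set.mem_Iio] at ha hb
          have hne : (⟨k * m + a, hjlt k a hk ha⟩ : Fin n) ≠ ⟨k * m + b, hjlt k b hk hb⟩ := by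
            simp only [ne_eq, Fin.mk.injEq]
            omega
          have hIF := hindep.indepFun hne
          exact hIF.comp hmI hmI
        rw [hXeq, variance_const_mul]
        have hsum_eq : (fun ω => ∑ j ∈ Finset.range m, Y (k * m + j) ω)
            = ∑ j ∈ Finset.range m, fun ω => Y (k * m + j) ω := by
          funext ω; simp [Finset.sum_apply]
        rw [hsum_eq, IndepFun.variance_sum hmem hpair]
        rw [Finset.sum_congr rfl (fun j hj => hYvar _ (hjlt k j hk (Finset.mem_range.mp hj)))]
        rw [Finset.sum_const, Finset.card_range, nsmul_eq_mul]
        field_simp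
    -- per-block probability bound
    have hbadle : ∀ k, k < K → ℙ (bad k) ≤ ENNReal.ofReal (1 / 8 : ℝ) := by
      intro k hk
      obtain ⟨hXmem, hXint, hXvar⟩ := hXbfact k hk
      rcases eq_or_lt_of_le hε0 with hεz | hεpos
      · -- ε = 0 ; then the variance vanishes
        have hLn0 : (0 : ℝ) < (L : ℝ) / n := by
          have : (0 : ℝ) < (L : ℝ) := by exact_mod_cast hL1
          have : (0 : ℝ) < (n : ℝ) := by exact_mod_cast hn0
          positivity
        have hsq : (0 : ℝ) < Real.sqrt ((L : ℝ) / n) := Real.sqrt_pos.mpr hLn0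
        have h3 : 12 * D * Real.sqrt σop * Real.sqrt ((L : ℝ) / n) = 0 := by
          rw [← hεdef]; exact hεz.symm
        have h4 : D * Real.sqrt σop = 0 := by
          rcases mul_eq_zero.mp h3 with h4 | h4
          · linarith
          · exact absurd h4 hsq.ne'
        have hσiz : σi = 0 := by
          have h5 : (D * Real.sqrt σop) ^ 2 = σop * (D * D) := by
            rw [mul_pow, Real.sq_sqrt hσ0]; ring
          have h6 : σop * (D * D) = 0 := by rw [← h5, h4]; ring
          linarith [hσile, hσi0]
        have hvz : variance (Xb k) ℙ = 0 := by
          rw [hXvar, hσiz, zero_div]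
        have hsub : bad k ⊆ ⋃ q : ℕ, {ω | ((q : ℝ) + 1)⁻¹ ≤ |Xb k ω - μf i|} := by
          intro ω hω
          have hpos : 0 < |Xb k ω - μf i| := by
            have := hω
            rw [hbaddef] at this
            simp only [Set.mem_setOf_eq] at this
            linarith [hε0, this]
          obtain ⟨q, hq⟩ := exists_nat_one_div_lt hpos
          rw [one_div] at hq
          exact Set.mem_iUnion.2 ⟨q, le_of_lt hq⟩
        have hzero : ∀ q : ℕ, ℙ {ω | ((q : ℝ) + 1)⁻¹ ≤ |Xb k ω - μf i|} = 0 := by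
          intro q
          have hcpos : (0 : ℝ) < ((q : ℝ) + 1)⁻¹ := by positivity
          have hcheb := meas_ge_le_variance_div_sq (μ := ℙ) hXmem hcpos
          rw [hXint, hvz, zero_div, ENNReal.ofReal_zero] at hcheb
          exact le_antisymm hcheb zero_le
        calc ℙ (bad k) ≤ ∑' q : ℕ, ℙ {ω | ((q : ℝ) + 1)⁻¹ ≤ |Xb k ω - μf i|} :=
              le_trans (measure_mono hsub) (measure_iUnion_le _)
          _ = 0 := by simp only [hzero, tsum_zero]
          _ ≤ ENNReal.ofReal (1 / 8 : ℝ) := zero_le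
      · -- ε > 0 : Chebyshev
        have hDpos : 0 < D := by
          by_contra hcon
          push_neg at hcon
          have : ε ≤ 0 := by
            rw [hεdef]
            have h1 : 12 * D ≤ 0 := by linarith
            have h2 : 0 ≤ Real.sqrt σop * Real.sqrt ((L : ℝ) / n) :=
              mul_nonneg (Real.sqrt_nonneg _) (Real.sqrt_nonneg _)
            nlinarith
          linarith
        have hσpos : 0 < σop := by
          rcases eq_or_lt_of_le hσ0 with hcon | hcon
          · exfalso
            rw [hεdef, ← hcon, Real.sqrt_zero, mul_zero, zero_mul] at hεpos
            exact lt_irrefl 0 hεpos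
          · exact hcon
        have hm0R : (0 : ℝ) < m := by exact_mod_cast hm0
        have hn0R : (0 : ℝ) < n := by exact_mod_cast hn0
        have hL0R : (0 : ℝ) < L := by exact_mod_cast hL1
        have hK0R : (0 : ℝ) < K := by exact_mod_cast hK1
        have hKmR : (n : ℝ) = (K : ℝ) * m := by exact_mod_cast hn
        have hKleR : (K : ℝ) ≤ 18 * L := by exact_mod_cast hKle
        have hε2 : ε ^ 2 = 144 * (D * D) * σop * ((L : ℝ) / n) := by
          rw [hεdef, mul_pow, mul_pow, mul_pow,
            Real.sq_sqrt hσ0, Real.sq_sqrt (le_of_lt (by positivity : (0:ℝ) < (L:ℝ)/n))]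
          ring
        have hvar8 : variance (Xb k) ℙ / ε ^ 2 ≤ 1 / 8 := by
          rw [hXvar, hε2]
          rw [div_le_div_iff₀ (by positivity) (by norm_num : (0 : ℝ) < 8)]
          have hstep1 : σi / m * 8 ≤ σop * (D * D) / m * 8 := by gcongr
          have hstep2 : σop * (D * D) / m * 8 ≤ 1 * (144 * (D * D) * σop * ((L : ℝ) / n)) := by
            rw [one_mul, hKmR]
            have he1 : σop * (D * D) / m * 8 = 8 * σop * (D * D) / m := by ring
            have he2 : 144 * (D * D) * σop * ((L : ℝ) / ((K : ℝ) * m))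
                = 144 * (D * D) * σop * (L : ℝ) / ((K : ℝ) * m) := by ring
            rw [he1, he2, div_le_div_iff₀ hm0R (by positivity : (0 : ℝ) < (K : ℝ) * m)]
            have hgoal : σop * (D * D) * 8 * K ≤ 144 * (D * D) * σop * L := by
              nlinarith [mul_le_mul_of_nonneg_left hKleR
                (show (0 : ℝ) ≤ 8 * σop * (D * D) by positivity)]
            nlinarith [mul_le_mul_of_nonneg_right hgoal (le_of_lt hm0R)]
          linarith
        have hcheb := meas_ge_le_variance_div_sq (μ := ℙ) hXmem hεpos
        rw [hXint] at hcheb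
        calc ℙ (bad k) ≤ ℙ {ω | ε ≤ |Xb k ω - μf i|} := by
              apply measure_mono
              intro ω hω
              rw [hbaddef] at hω
              simp only [Set.mem_setOf_eq] at hω ⊢
              exact le_of_lt hω
          _ ≤ ENNReal.ofReal (variance (Xb k) ℙ / ε ^ 2) := hcheb
          _ ≤ ENNReal.ofReal (1 / 8 : ℝ) := ENNReal.ofReal_le_ofReal hvar8
    -- median implies many bad blocks
    have hsubU : {ω | ε < |rt i ω - μf i|} ⊆
        ⋃ S ∈ Finset.powersetCard h (Finset.range K), ⋂ k ∈ S, bad k := by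
      intro ω hω
      simp only [Set.mem_setOf_eq] at hω
      have hcount : h ≤ ((Finset.range K).filter fun k => ε < |Xb k ω - μf i|).card := by
        rcases lt_abs.mp hω with hcase | hcase
        · have hmm := (hmom i ω).2
          have hsub2 : (Finset.range K).filter (fun k => rt i ω ≤ blockAvg m Y k ω)
              ⊆ (Finset.range K).filter (fun k => ε < |Xb k ω - μf i|) := by
            intro k hk
            rw [Finset.mem_filter] at hk ⊢
            refine ⟨hk.1, ?_⟩
            have h2 : rt i ω ≤ Xb k ω := hk.2
            have h3 : ε < Xb k ω - μf i := by linarith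
            exact lt_of_lt_of_le h3 (le_abs_self _)
          have hcard := Finset.card_le_card hsub2
          have hK2' : K ≤ 2 *
              ((Finset.range K).filter (fun k => rt i ω ≤ blockAvg m Y k ω)).card := by
            have : (K : ℝ) ≤ 2 *
                ((Finset.range K).filter (fun k => rt i ω ≤ blockAvg m Y k ω)).card := by
              linarith [hmm]
            exact_mod_cast this
          omega
        · have hmm := (hmom i ω).1
          have hsub2 : (Finset.range K).filter (fun k => blockAvg m Y k ω ≤ rt i ω)
              ⊆ (Finset.range K).filter (fun k => ε < |Xb k ω - μf i|) := by
            intro k hk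
            rw [Finset.mem_filter] at hk ⊢
            refine ⟨hk.1, ?_⟩
            have h2 : Xb k ω ≤ rt i ω := hk.2
            have h3 : ε < -(Xb k ω - μf i) := by linarith
            exact lt_of_lt_of_le h3 (neg_le_abs _)
          have hcard := Finset.card_le_card hsub2
          have hK2' : K ≤ 2 *
              ((Finset.range K).filter (fun k => blockAvg m Y k ω ≤ rt i ω)).card := by
            have : (K : ℝ) ≤ 2 *
                ((Finset.range K).filter (fun k => blockAvg m Y k ω ≤ rt i ω)).card := by
              linarith [hmm]
            exact_mod_cast this
          omega
      obtain ⟨S, hSsub, hScard⟩ := Finset.exists_subset_card_eq hcount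
      refine Set.mem_iUnion₂.mpr ⟨S, ?_, ?_⟩
      · exact Finset.mem_powersetCard.mpr ⟨hSsub.trans (Finset.filter_subset _ _), hScard⟩
      · exact Set.mem_iInter₂.mpr fun k hk => (Finset.mem_filter.mp (hSsub hk)).2
    -- intersection bound
    have hSle : ∀ S ∈ Finset.powersetCard h (Finset.range K),
        ℙ (⋂ k ∈ S, bad k) ≤ ENNReal.ofReal (1 / 8 : ℝ) ^ h := by
      intro S hS
      obtain ⟨hSsub, hScard⟩ := Finset.mem_powersetCard.mp hS
      set B : ℕ → Finset (Fin n) := fun k =>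
        Finset.univ.filter (fun x : Fin n => k * m ≤ x.1 ∧ x.1 < k * m + m) with hBdef
      have hdisj : ∀ k l, k ≠ l → Disjoint (B k) (B l) := by
        intro k l hkl
        rw [Finset.disjoint_left]
        intro x hx hx'
        simp only [hBdef, Finset.mem_filter, Finset.mem_univ, true_and] at hx hx'
        have h1 : x.1 / m = k :=
          Nat.div_eq_of_lt_le hx.1 (by rw [Nat.succ_mul]; exact hx.2)
        have h2 : x.1 / m = l :=
          Nat.div_eq_of_lt_le hx'.1 (by rw [Nat.succ_mul]; exact hx'.2)
        exact hkl (h1 ▸ h2)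
      have hArep : ∀ k ∈ S, ∃ C : Set ((x : B k) → EuclideanSpace ℝ (Fin d)),
          MeasurableSet C ∧ bad k = (fun ω (x : B k) => gs x.1 ω) ⁻¹' C := by
        intro k hk
        have hkK : k < K := Finset.mem_range.mp (hSsub hk)
        have hidx : ∀ j : {x // x ∈ Finset.range m},
            (⟨k * m + j.1, hjlt k j.1 hkK (Finset.mem_range.mp j.2)⟩ : Fin n) ∈ B k := by
          intro j
          have hjm := Finset.mem_range.mp j.2
          simp only [hBdef, Finset.mem_filter, Finset.mem_univ, true_and]
          omega
        set idx : {x // x ∈ Finset.range m} → {x // x ∈ B k} := fun j =>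
          ⟨⟨k * m + j.1, hjlt k j.1 hkK (Finset.mem_range.mp j.2)⟩, hidx j⟩ with hidxdef
        refine ⟨(fun t : (x : B k) → EuclideanSpace ℝ (Fin d) =>
            (∑ j ∈ (Finset.range m).attach, ⟪t (idx j), v i⟫) / m)
            ⁻¹' {y : ℝ | ε < |y - μf i|}, ?_, ?_⟩
        · have hfm : Measurable (fun t : (x : B k) → EuclideanSpace ℝ (Fin d) =>
              (∑ j ∈ (Finset.range m).attach, ⟪t (idx j), v i⟫) / m) := by
            apply Measurable.div_const
            apply Finset.measurable_sum
            intro j _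
            exact hmI.comp (measurable_pi_apply (idx j))
          have hsm : MeasurableSet {y : ℝ | ε < |y - μf i|} := by
            have hcont : Continuous fun y : ℝ => |y - μf i| :=
              (continuous_id.sub continuous_const).abs
            exact (isOpen_lt continuous_const hcont).measurableSet
          exact hfm hsm
        · ext ω
          have hval : (∑ j ∈ (Finset.range m).attach, ⟪gs (k * m + j.1) ω, v i⟫) / m
              = Xb k ω := by
            simp only [hXbdef, blockAvg, hYdef]
            rw [Finset.sum_attach (Finset.range m) (fun j => ⟪gs (k * m + j) ω, v i⟫)]
          simp only [Set.mem_preimage, Set.mem_setOf_eq, hbaddef]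
          rw [hval]
      have hprod := meas_biInter_blocks (f := fun j : Fin n => gs j)
        (fun j => hmeas j) hindep B hdisj bad S hArep
      rw [hprod]
      calc ∏ k ∈ S, ℙ (bad k) ≤ ∏ _k ∈ S, ENNReal.ofReal (1 / 8 : ℝ) :=
            Finset.prod_le_prod' (fun k hk => hbadle k (Finset.mem_range.mp (hSsub hk)))
        _ = ENNReal.ofReal (1 / 8 : ℝ) ^ h := by rw [Finset.prod_const, hScard]
    -- numeric bound
    have hreal : ((K.choose h : ℝ)) * (1 / 8 : ℝ) ^ h ≤ 2 / (N : ℝ) ^ 4 := by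
      have hN0 : (0 : ℝ) < N := by positivity
      have h2h : K ≤ 2 * h := by omega
      have hchoose : (K.choose h : ℝ) ≤ 2 ^ K := by
        have hc : K.choose h ≤ 2 ^ K := by
          calc K.choose h ≤ ∑ j ∈ Finset.range (K + 1), K.choose j :=
                Finset.single_le_sum (f := fun j => K.choose j)
                  (fun _ _ => Nat.zero_le _) (Finset.mem_range.mpr (by omega))
            _ = 2 ^ K := Nat.sum_range_choose K
        exact_mod_cast hc
      have hKR : 18 * Real.log N ≤ (K : ℝ) := by
        rw [hK]; exact Nat.le_ceil _
      have hstep : (2 : ℝ) ^ K * (1 / 8 : ℝ) ^ h ≤ 2 / (N : ℝ) ^ 4 := by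
        have he18 : ((1 : ℝ) / 8) = (2 : ℝ) ^ (-(3 : ℝ)) := by
          rw [Real.rpow_neg (by norm_num : (0:ℝ) ≤ 2),
            show ((3 : ℝ)) = ((3 : ℕ) : ℝ) by norm_num, Real.rpow_natCast]
          norm_num
        have e1 : (2 : ℝ) ^ K = (2 : ℝ) ^ ((K : ℕ) : ℝ) := (Real.rpow_natCast 2 K).symm
        have e2 : ((1 : ℝ) / 8) ^ h = (2 : ℝ) ^ (-(3 : ℝ) * h) := by
          rw [he18, ← Real.rpow_natCast ((2:ℝ) ^ (-(3:ℝ))) h, ← Real.rpow_mul (by norm_num)]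
        rw [e1, e2, ← Real.rpow_add (by norm_num : (0:ℝ) < 2)]
        have hexp : ((K : ℕ) : ℝ) + -(3 : ℝ) * h ≤ -((K : ℝ) / 2) := by
          have hc : (K : ℝ) ≤ 2 * (h : ℝ) := by exact_mod_cast h2h
          linarith
        have hlast : (2 : ℝ) ^ (-((K : ℝ) / 2)) ≤ 1 / (N : ℝ) ^ 4 := by
          have hrw : (1 : ℝ) / (N : ℝ) ^ 4 = (N : ℝ) ^ (-(4 : ℝ)) := by
            rw [Real.rpow_neg hN0.le,
              show ((4 : ℝ)) = ((4 : ℕ) : ℝ) by norm_num, Real.rpow_natCast, one_div]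
          rw [hrw, Real.rpow_def_of_pos (by norm_num : (0:ℝ) < 2),
            Real.rpow_def_of_pos hN0, Real.exp_le_exp]
          have hlog2 : (0.6931471803 : ℝ) < Real.log 2 := Real.log_two_gt_d9
          nlinarith [hKR, hlogN, hlog2, mul_le_mul_of_nonneg_right hKR
            (show (0:ℝ) ≤ Real.log 2 by linarith),
            mul_lt_mul_of_pos_left hlog2 hlogN]
        calc (2 : ℝ) ^ (((K : ℕ) : ℝ) + -(3 : ℝ) * h)
            ≤ (2 : ℝ) ^ (-((K : ℝ) / 2)) :=
              Real.rpow_le_rpow_of_exponent_le (by norm_num) hexp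
          _ ≤ 1 / (N : ℝ) ^ 4 := hlast
          _ ≤ 2 / (N : ℝ) ^ 4 := by gcongr <;> norm_num
      calc (K.choose h : ℝ) * (1 / 8 : ℝ) ^ h
          ≤ (2 : ℝ) ^ K * (1 / 8 : ℝ) ^ h :=
            mul_le_mul_of_nonneg_right hchoose (by positivity)
        _ ≤ 2 / (N : ℝ) ^ 4 := hstep
    calc ℙ {ω | ε < |rt i ω - μf i|}
        ≤ ℙ (⋃ S ∈ Finset.powersetCard h (Finset.range K), ⋂ k ∈ S, bad k) :=
          measure_mono hsubU
      _ ≤ ∑ S ∈ Finset.powersetCard h (Finset.range K), ℙ (⋂ k ∈ S, bad k) :=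
          measure_biUnion_finset_le _ _
      _ ≤ ∑ _S ∈ Finset.powersetCard h (Finset.range K), ENNReal.ofReal (1 / 8 : ℝ) ^ h :=
          Finset.sum_le_sum hSle
      _ = (K.choose h : ℝ≥0∞) * ENNReal.ofReal (1 / 8 : ℝ) ^ h := by
          rw [Finset.sum_const, Finset.card_powersetCard, Finset.card_range, nsmul_eq_mul]
      _ = ENNReal.ofReal ((K.choose h : ℝ) * (1 / 8 : ℝ) ^ h) := by
          rw [← ENNReal.ofReal_pow (by norm_num), ← ENNReal.ofReal_natCast (K.choose h),
            ← ENNReal.ofReal_mul (by positivity)]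
      _ ≤ ENNReal.ofReal (2 / (N : ℝ) ^ 4) := ENNReal.ofReal_le_ofReal hreal
  -- conclusion
  set T : Set Ω := {ω | |⟪G, v (ip ω) - v (im ω)⟫ - ⟪G, v jp - v jm⟫| ≤
      48 * D * Real.sqrt (matOpNorm Sig) * Real.sqrt ((L : ℝ) / n)} with hT
  have hcompl : Tᶜ ⊆ ⋃ i : Fin N, {ω | ε < |rt i ω - μf i|} := by
    intro ω hω
    by_contra hc
    simp only [Set.mem_iUnion, Set.mem_setOf_eq, not_exists, not_lt] at hc
    exact hω (hgood ω fun i => hc i)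
  have hPc : ℙ Tᶜ ≤ ENNReal.ofReal (2 / (N : ℝ) ^ 3) := by
    calc ℙ Tᶜ ≤ ∑' i : Fin N, ℙ {ω | ε < |rt i ω - μf i|} :=
          le_trans (measure_mono hcompl) (measure_iUnion_le _)
      _ = ∑ i : Fin N, ℙ {ω | ε < |rt i ω - μf i|} := tsum_fintype _
      _ ≤ ∑ _i : Fin N, ENNReal.ofReal (2 / (N : ℝ) ^ 4) :=
          Finset.sum_le_sum (fun i _ => hatom i)
      _ = (N : ℝ≥0∞) * ENNReal.ofReal (2 / (N : ℝ) ^ 4) := by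
          rw [Finset.sum_const, Finset.card_univ, Fintype.card_fin, nsmul_eq_mul]
      _ = ENNReal.ofReal (2 / (N : ℝ) ^ 3) := by
          rw [← ENNReal.ofReal_natCast N, ← ENNReal.ofReal_mul (by positivity)]
          congr 1
          have hNpos : (0 : ℝ) < N := by positivity
          field_simp
  have hone : (1 : ℝ≥0∞) ≤ ℙ T + ℙ Tᶜ := by
    calc (1 : ℝ≥0∞) = ℙ (T ∪ Tᶜ) := by rw [Set.union_compl_self, measure_univ]
      _ ≤ ℙ T + ℙ Tᶜ := measure_union_le _ _
  have hPT : 1 - ENNReal.ofReal (2 / (N : ℝ) ^ 3) ≤ ℙ T := by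
    rw [tsub_le_iff_right]
    calc (1 : ℝ≥0∞) ≤ ℙ T + ℙ Tᶜ := hone
      _ ≤ ℙ T + ENNReal.ofReal (2 / (N : ℝ) ^ 3) := add_le_add_right hPc _
  have hc1 : (2 : ℝ) / (N : ℝ) ^ 3 ≤ 1 := by
    rw [div_le_one (by positivity)]
    calc (2 : ℝ) ≤ (2 : ℝ) ^ 3 := by norm_num
      _ ≤ (N : ℝ) ^ 3 := by gcongr; · norm_num; · exact_mod_cast hN
  have htr : ((1 : ℝ≥0∞) - ENNReal.ofReal (2 / (N : ℝ) ^ 3)).toReal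
      = 1 - 2 / (N : ℝ) ^ 3 := by
    rw [← ENNReal.ofReal_one, ← ENNReal.ofReal_sub _ (by positivity),
      ENNReal.toReal_ofReal (by linarith)]
  calc 1 - 2 / (N : ℝ) ^ 3
      = ((1 : ℝ≥0∞) - ENNReal.ofReal (2 / (N : ℝ) ^ 3)).toReal := htr.symm
    _ ≤ (ℙ T).toReal := ENNReal.toReal_mono (measure_ne_top _ _) hPT
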